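/- Let a > 1/2 and b > 1/2, and let Λ = {(m₁, m₂, a(n₁ + n₂), b(n₂ − n₁)) : m₁, m₂, n₁, n₂ ∈ ℤ} ⊂ ℝ² × ℝ². Then the Gabor system (g₂, Λ) is incomplete in L²(ℝ²): there exists a nonzero F ∈ L²(ℝ²) with ⟨F, π(λ)g₂⟩ = 0 for all λ ∈ Λ. -/

import Mathlib

open MeasureTheory Complex

noncomputable section

/-- Euclidean dot product on `ι → ℝ`. -/
def dotR {ι : Type*} [Fintype ι] (x y : ι → ℝ) : ℝ := ∑ i, x i * y i

/-- Time-frequency shift `π(x,ω) g (t) = e^{2πi⟨ω,t⟩} g(t-x)`. -/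
def tfShift {ι : Type*} [Fintype ι] (x ω : ι → ℝ) (g : (ι → ℝ) → ℂ) : (ι → ℝ) → ℂ :=
  fun t => Complex.exp (2 * Real.pi * Complex.I * (dotR ω t : ℝ)) * g (t - x)

/-- The Gabor coefficient `⟨f, π(x,ω) g⟩` in `L²`; equivalently the
short-time Fourier transform `V_g f (x, ω)`. -/
def gaborCoef {ι : Type*} [Fintype ι] (f g : (ι → ℝ) → ℂ) (x ω : ι → ℝ) : ℂ :=
  ∫ t : ι → ℝ, f t * (starRingEnd ℂ) (tfShift x ω g t)

/-- `(g, Λ)` satisfies the frame inequalities for `L²(ℝ^ι)` with bounds `A`, `B`. -/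
def IsGaborFrameWith {ι : Type*} [Fintype ι] (g : (ι → ℝ) → ℂ)
    (Λ : Set ((ι → ℝ) × (ι → ℝ))) (A B : ℝ) : Prop :=
  ∀ f : (ι → ℝ) → ℂ, MemLp f 2 volume →
    A * (∫ t, ‖f t‖ ^ 2) ≤
        (∑' lam : Λ, ‖gaborCoef f g (lam : ((ι → ℝ) × (ι → ℝ))).1 (lam : ((ι → ℝ) × (ι → ℝ))).2‖ ^ 2) ∧
    (∑' lam : Λ, ‖gaborCoef f g (lam : ((ι → ℝ) × (ι → ℝ))).1 (lam : ((ι → ℝ) × (ι → ℝ))).2‖ ^ 2) ≤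
        B * (∫ t, ‖f t‖ ^ 2)

/-- `(g, Λ)` is a frame for `L²(ℝ^ι)`. -/
def GaborFrame {ι : Type*} [Fintype ι] (g : (ι → ℝ) → ℂ)
    (Λ : Set ((ι → ℝ) × (ι → ℝ))) : Prop :=
  ∃ A B : ℝ, 0 < A ∧ 0 < B ∧ IsGaborFrameWith g Λ A B

/-- `(g, Λ)` is complete in `L²(ℝ^ι)`. -/
def GaborComplete {ι : Type*} [Fintype ι] (g : (ι → ℝ) → ℂ)
    (Λ : Set ((ι → ℝ) × (ι → ℝ))) : Prop :=
  ∀ f : (ι → ℝ) → ℂ, MemLp f 2 volume →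
    (∀ lam ∈ Λ, gaborCoef f g lam.1 lam.2 = 0) → f =ᵐ[volume] 0

/-- The normalized Gaussian `g_d(t) = 2^{d/4} e^{-π ‖t‖²}` in dimension `d = card ι`. -/
def gaussian (ι : Type*) [Fintype ι] : (ι → ℝ) → ℂ :=
  fun t => (((2 : ℝ) ^ ((Fintype.card ι : ℝ) / 4) * Real.exp (-(Real.pi * dotR t t)) : ℝ) : ℂ)

/-!
For `0 < im τ` and `Q > 0`, the Gabor coefficient of the Gaussian-damped theta function
`θ(z + Q t | τ) e^{-π(Q-1)t²}` against `e^{-πt²}` at `(x, ω)` is, up to a nowhere-vanishing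
factor, `θ(z + x - iω | τ + iQ)` (expand `θ` and integrate term by term). Taking `1 < Q < c`,
`τ + iQ = ic` and `z = (1 + ic)/2` puts the zeros `(1 + ic)/2 + ℤ + icℤ` of `θ(· | ic)` exactly
on the lattice `ℤ × cℤ`, while `θ(0 | ic) > 0`: this gives a nonzero `u_c ∈ L²(ℝ)` orthogonal
to the Gabor system of `e^{-πt²}` over `ℤ × cℤ`.

In two variables, Gabor coefficients of tensor products factor. Since `n₁ + n₂` and `n₂ - n₁`
have the same parity, `F = u_{2a} ⊗ (e^{2πibt} u_{2b})` works: the first factor vanishes when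
`a(n₁ + n₂) ∈ 2aℤ`, the second when `b(n₂ - n₁) - b ∈ 2bℤ`.
-/

open Real ComplexConjugate

lemma summable_norm_jacobiTheta₂_term (z : ℂ) {τ : ℂ} (hτ : 0 < τ.im) :
    Summable fun n : ℤ => ‖jacobiTheta₂_term n z τ‖ :=
  summable_norm_iff.mpr ((summable_jacobiTheta₂_term_iff z τ).mpr hτ)

lemma norm_jacobiTheta₂_term_add_ofReal (n : ℤ) (z τ : ℂ) (s : ℝ) :
    ‖jacobiTheta₂_term n (z + s) τ‖ = ‖jacobiTheta₂_term n z τ‖ := by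
  simp [norm_jacobiTheta₂_term]

lemma norm_jacobiTheta₂_add_ofReal_le (z : ℂ) {τ : ℂ} (hτ : 0 < τ.im) (s : ℝ) :
    ‖jacobiTheta₂ (z + s) τ‖ ≤ ∑' n : ℤ, ‖jacobiTheta₂_term n z τ‖ := by
  simp_rw [jacobiTheta₂, ← norm_jacobiTheta₂_term_add_ofReal _ z τ s]
  exact norm_tsum_le_tsum_norm (by simpa [norm_jacobiTheta₂_term_add_ofReal]
    using summable_norm_jacobiTheta₂_term z hτ)

lemma jacobiTheta₂_half_add_int_add_int_mul_eq_zero (τ : ℂ) (m n : ℤ) :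
    jacobiTheta₂ ((1 + τ) / 2 + m + n * τ) τ = 0 := by
  set w := (1 + τ) / 2 + m + n * τ
  -- the terms cancel in pairs under `k ↦ -2n - 1 - k`
  have hpair (k : ℤ) : jacobiTheta₂_term (-2 * n - 1 - k) w τ = -jacobiTheta₂_term k w τ := by
    have hexp : 2 * π * I * ((-2 * n - 1 - k : ℤ) : ℂ) * w
          + π * I * ((-2 * n - 1 - k : ℤ) : ℂ) ^ 2 * τ
        = 2 * π * I * k * w + π * I * k ^ 2 * τ + π * I
          + ((-(m * (2 * n + 2 * k + 1) + n + k + 1) : ℤ) : ℂ) * (2 * π * I) := by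
      simp only [w]; push_cast; ring
    rw [jacobiTheta₂_term, jacobiTheta₂_term, hexp, Complex.exp_add, Complex.exp_add,
      Complex.exp_pi_mul_I, Complex.exp_int_mul_two_pi_mul_I]
    ring
  have h := (Equiv.subLeft (-2 * n - 1)).tsum_eq (jacobiTheta₂_term · w τ)
  simp only [Equiv.subLeft_apply, hpair, tsum_neg] at h
  exact neg_eq_self.mp h

lemma jacobiTheta₂_zero_ofReal_mul_I_ne_zero {T : ℝ} (hT : 0 < T) :
    jacobiTheta₂ 0 (T * I) ≠ 0 := by
  have hterm (n : ℤ) : jacobiTheta₂_term n 0 (T * I) = (rexp (-π * n ^ 2 * T) : ℂ) := by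
    rw [jacobiTheta₂_term, Complex.ofReal_exp]
    congr 1
    push_cast
    linear_combination (π * n ^ 2 * T : ℂ) * I_sq
  have hsum : Summable fun n : ℤ => rexp (-π * n ^ 2 * T) := by
    simpa [norm_jacobiTheta₂_term] using summable_norm_jacobiTheta₂_term 0 (τ := T * I)
      (by simpa using hT)
  rw [jacobiTheta₂, tsum_congr hterm, ← Complex.ofReal_tsum, Complex.ofReal_ne_zero]
  exact (hsum.tsum_pos (fun n => (Real.exp_pos _).le) 0 (Real.exp_pos _)).ne'

def gaborCoef₁ (f : ℝ → ℂ) (x ω : ℝ) : ℂ :=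
  ∫ t : ℝ, f t * cexp (-(2 * π * I * ω * t) - π * (t - x) ^ 2)

def thetaWindow (z τ : ℂ) (Q t : ℝ) : ℂ :=
  jacobiTheta₂ (z + Q * t) τ * cexp (-(π * (Q - 1) * t ^ 2))

lemma jacobiTheta₂_term_mul_gaussian_eq_cexp (Q : ℝ) (n : ℤ) (z τ : ℂ) (x ω t : ℝ) :
    jacobiTheta₂_term n (z + Q * t) τ * cexp (-(π * (Q - 1) * t ^ 2))
        * cexp (-(2 * π * I * ω * t) - π * (t - x) ^ 2)
      = cexp (-(π * Q) * t ^ 2 + (2 * π * (x - I * ω) + 2 * π * I * n * Q) * t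
          + (2 * π * I * n * z + π * I * n ^ 2 * τ - π * x ^ 2)) := by
  rw [jacobiTheta₂_term, ← Complex.exp_add, ← Complex.exp_add]
  congr 1
  ring

lemma integrable_jacobiTheta₂_term_mul_gaussian {Q : ℝ} (hQ : 0 < Q) (n : ℤ) (z τ : ℂ)
    (x ω : ℝ) :
    Integrable fun t : ℝ => jacobiTheta₂_term n (z + Q * t) τ * cexp (-(π * (Q - 1) * t ^ 2))
        * cexp (-(2 * π * I * ω * t) - π * (t - x) ^ 2) := by
  have hb : 0 < (π * Q : ℂ).re := by
    simp only [← ofReal_mul, ofReal_re]; positivity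
  simp_rw [jacobiTheta₂_term_mul_gaussian_eq_cexp]
  exact integrable_cexp_quadratic hb _ _

lemma integral_jacobiTheta₂_term_mul_gaussian {Q : ℝ} (hQ : 0 < Q) (n : ℤ) (z τ : ℂ)
    (x ω : ℝ) :
    ∫ t : ℝ, jacobiTheta₂_term n (z + Q * t) τ * cexp (-(π * (Q - 1) * t ^ 2))
        * cexp (-(2 * π * I * ω * t) - π * (t - x) ^ 2)
      = (1 / Q) ^ (1 / 2 : ℂ) * cexp (π * (x - I * ω) ^ 2 / Q - π * x ^ 2)
        * jacobiTheta₂_term n (z + x - I * ω) (τ + I * Q) := by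
  have hb : (-(π * Q : ℂ)).re < 0 := by
    simp only [neg_re, ← ofReal_mul, ofReal_re, Left.neg_neg_iff]; positivity
  have hQ' : (Q : ℂ) ≠ 0 := ofReal_ne_zero.mpr hQ.ne'
  have hπ : (π : ℂ) ≠ 0 := ofReal_ne_zero.mpr pi_ne_zero
  simp_rw [jacobiTheta₂_term_mul_gaussian_eq_cexp]
  rw [integral_cexp_quadratic hb, jacobiTheta₂_term, mul_assoc ((1 / (Q : ℂ)) ^ _),
    ← Complex.exp_add]
  congr 1
  · congr 1; field_simp
  · congr 1; field_simp; ring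

theorem gaborCoef₁_thetaWindow (z : ℂ) {τ : ℂ} (hτ : 0 < τ.im) {Q : ℝ} (hQ : 0 < Q)
    (x ω : ℝ) :
    gaborCoef₁ (thetaWindow z τ Q) x ω
      = (1 / Q) ^ (1 / 2 : ℂ) * cexp (π * (x - I * ω) ^ 2 / Q - π * x ^ 2)
        * jacobiTheta₂ (z + x - I * ω) (τ + I * Q) := by
  have hnorm (n : ℤ) (t : ℝ) : ‖jacobiTheta₂_term n (z + Q * t) τ
      * cexp (-(π * (Q - 1) * t ^ 2)) * cexp (-(2 * π * I * ω * t) - π * (t - x) ^ 2)‖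
      = ‖jacobiTheta₂_term n z τ‖
        * ‖cexp (-(π * (Q - 1) * t ^ 2)) * cexp (-(2 * π * I * ω * t) - π * (t - x) ^ 2)‖ := by
    rw [mul_assoc, norm_mul, ← ofReal_mul, norm_jacobiTheta₂_term_add_ofReal]
  have hsum : Summable fun n : ℤ => ∫ t : ℝ, ‖jacobiTheta₂_term n (z + Q * t) τ
      * cexp (-(π * (Q - 1) * t ^ 2)) * cexp (-(2 * π * I * ω * t) - π * (t - x) ^ 2)‖ := by
    simp_rw [hnorm, integral_const_mul]
    exact (summable_norm_jacobiTheta₂_term z hτ).mul_right _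
  rw [jacobiTheta₂, ← tsum_mul_left]
  simp_rw [← integral_jacobiTheta₂_term_mul_gaussian hQ]
  rw [integral_tsum_of_summable_integral_norm
    (integrable_jacobiTheta₂_term_mul_gaussian hQ · z τ x ω) hsum]
  simp_rw [gaborCoef₁, thetaWindow, jacobiTheta₂, tsum_mul_right]

lemma continuous_thetaWindow (z : ℂ) {τ : ℂ} (hτ : 0 < τ.im) (Q : ℝ) :
    Continuous (thetaWindow z τ Q) := by
  refine Continuous.mul (continuous_iff_continuousAt.mpr fun t => ?_) (by fun_prop)
  exact (differentiableAt_jacobiTheta₂_fst _ hτ).continuousAt.comp (f := fun t : ℝ => z + Q * t)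
    (by fun_prop)

theorem memLp_thetaWindow (z : ℂ) {τ : ℂ} (hτ : 0 < τ.im) {Q : ℝ} (hQ : 1 < Q) :
    MemLp (thetaWindow z τ Q) 2 := by
  set B := ∑' n : ℤ, ‖jacobiTheta₂_term n z τ‖
  have hcont := continuous_thetaWindow z hτ Q
  rw [memLp_two_iff_integrable_sq_norm hcont.aestronglyMeasurable]
  refine ((integrable_exp_neg_mul_sq (b := 2 * π * (Q - 1)) (by nlinarith [pi_pos])).const_mul
    (B ^ 2)).mono' (hcont.norm.pow 2).aestronglyMeasurable (ae_of_all _ fun t => ?_)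
  have hgauss : ‖cexp (-(π * (Q - 1) * t ^ 2))‖ ^ 2 = rexp (-(2 * π * (Q - 1)) * t ^ 2) := by
    rw [show (-(π * (Q - 1) * t ^ 2) : ℂ) = ((-(π * (Q - 1) * t ^ 2) : ℝ) : ℂ) by push_cast; rfl,
      Complex.norm_exp_ofReal, ← Real.exp_nat_mul]
    congr 1
    push_cast
    ring
  rw [Real.norm_of_nonneg (by positivity), thetaWindow, norm_mul, mul_pow, hgauss, ← ofReal_mul]
  gcongr
  exact norm_jacobiTheta₂_add_ofReal_le z hτ _

theorem exists_memLp_gaborCoef₁_ne_zero_and_eq_zero_on_lattice {c : ℝ} (hc : 1 < c) :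
    ∃ u : ℝ → ℂ, MemLp u 2 ∧ (∃ x ω : ℝ, gaborCoef₁ u x ω ≠ 0) ∧
      ∀ m n : ℤ, gaborCoef₁ u m (c * n) = 0 := by
  obtain ⟨Q, hQ, hQc⟩ := exists_between hc
  have hτ : 0 < ((c - Q : ℝ) * I).im := by simpa using hQc
  have hτQ : (c - Q : ℝ) * I + I * Q = c * I := by push_cast; ring
  have hcoef := gaborCoef₁_thetaWindow ((1 + c * I) / 2) hτ (Q := Q) (by linarith)
  refine ⟨thetaWindow ((1 + c * I) / 2) ((c - Q : ℝ) * I) Q, memLp_thetaWindow _ hτ hQ,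
    ⟨-1 / 2, c / 2, ?_⟩, fun m n => ?_⟩
  · have hzero : (1 + c * I) / 2 + ((-1 / 2 : ℝ) : ℂ) - I * ((c / 2 : ℝ) : ℂ) = 0 := by
      push_cast; ring
    rw [hcoef, hτQ, hzero]
    refine mul_ne_zero (mul_ne_zero ?_ (Complex.exp_ne_zero _))
      (jacobiTheta₂_zero_ofReal_mul_I_ne_zero (by linarith))
    exact (Complex.cpow_ne_zero_iff_of_exponent_ne_zero (by norm_num)).mpr (by simp; linarith)
  · have hlattice : (1 + c * I) / 2 + ((m : ℝ) : ℂ) - I * ((c * n : ℝ) : ℂ)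
        = (1 + c * I) / 2 + m + ((-n : ℤ) : ℂ) * (c * I) := by
      push_cast; ring
    rw [hcoef, hτQ, hlattice, jacobiTheta₂_half_add_int_add_int_mul_eq_zero, mul_zero]

lemma conj_tfShift_gaussian {ι : Type*} [Fintype ι] (x ω t : ι → ℝ) :
    conj (tfShift x ω (gaussian ι) t) = ((2 : ℝ) ^ ((Fintype.card ι : ℝ) / 4) : ℝ)
      * ∏ i, cexp (-(2 * π * I * ω i * t i) - π * (t i - x i) ^ 2) := by
  rw [← Complex.exp_sum, tfShift, gaussian, map_mul, ← exp_conj, conj_ofReal, ofReal_mul,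
    ofReal_exp, mul_left_comm, ← Complex.exp_add]
  congr 2
  simp only [dotR, Pi.sub_apply, map_mul, conj_ofReal, conj_I, map_ofNat]
  push_cast
  simp only [Finset.mul_sum, ← Finset.sum_neg_distrib, ← Finset.sum_add_distrib]
  refine Finset.sum_congr rfl fun i _ => ?_
  ring

theorem gaborCoef_pi_prod {ι : Type*} [Fintype ι] (f : ι → ℝ → ℂ) (x ω : ι → ℝ) :
    gaborCoef (fun t => ∏ i, f i (t i)) (gaussian ι) x ω
      = ((2 : ℝ) ^ ((Fintype.card ι : ℝ) / 4) : ℝ) * ∏ i, gaborCoef₁ (f i) (x i) (ω i) := by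
  simp_rw [gaborCoef, conj_tfShift_gaussian, mul_left_comm (∏ i, f i _),
    ← Finset.prod_mul_distrib, integral_const_mul]
  exact congrArg _ (integral_fintype_prod_volume_eq_prod
    fun i s => f i s * cexp (-(2 * π * I * ω i * s) - π * (s - x i) ^ 2))

theorem memLp_two_pi_prod {ι : Type*} [Fintype ι] {f : ι → ℝ → ℂ} (hf : ∀ i, MemLp (f i) 2) :
    MemLp (fun t : ι → ℝ => ∏ i, f i (t i)) 2 := by
  have hmeas : AEStronglyMeasurable (fun t : ι → ℝ => ∏ i, f i (t i)) :=
    Finset.aestronglyMeasurable_fun_prod _ fun i _ =>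
      (hf i).1.comp_quasiMeasurePreserving (Measure.quasiMeasurePreserving_eval _ i)
  rw [memLp_two_iff_integrable_sq_norm hmeas]
  simp_rw [norm_prod, ← Finset.prod_pow]
  exact Integrable.fintype_prod fun i => (memLp_two_iff_integrable_sq_norm (hf i).1).mp (hf i)

theorem MeasureTheory.MemLp.modulate {f : ℝ → ℂ} {p : ENNReal} (hf : MemLp f p) (b : ℝ) :
    MemLp (fun t : ℝ => cexp (2 * π * I * b * t) * f t) p := by
  refine hf.congr_norm ((by fun_prop : Continuous fun t : ℝ => cexp (2 * π * I * b * t))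
    |>.aestronglyMeasurable.mul hf.1) (ae_of_all _ fun t => ?_)
  rw [norm_mul, show (2 * π * I * b * t : ℂ) = ((2 * π * b * t : ℝ) : ℂ) * I by push_cast; ring,
    norm_exp_ofReal_mul_I, one_mul]

lemma gaborCoef₁_modulate (f : ℝ → ℂ) (b x ω : ℝ) :
    gaborCoef₁ (fun t : ℝ => cexp (2 * π * I * b * t) * f t) x ω = gaborCoef₁ f x (ω - b) := by
  refine integral_congr_ae (ae_of_all _ fun t => ?_)
  dsimp only
  rw [mul_comm (cexp _) (f t), mul_assoc, ← Complex.exp_add]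
  congr 2
  push_cast
  ring

lemma not_ae_eq_zero_of_gaborCoef_ne_zero {ι : Type*} [Fintype ι] {f g : (ι → ℝ) → ℂ}
    {x ω : ι → ℝ} (h : gaborCoef f g x ω ≠ 0) : ¬ f =ᵐ[volume] 0 := fun h0 =>
  h (integral_eq_zero_of_ae (h0.mono fun t ht => by simp [ht]))

/-- for `a > 1/2` and `b > 1/2`, the Gaussian Gabor system over
`ℤ² × [[a, a], [-b, b]]ℤ²` is incomplete in `L²(ℝ²)`. -/
theorem gaussian_incomplete_rotated_lattice (a b : ℝ)
    (ha : 1 / 2 < a) (hb : 1 / 2 < b) :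
    ∃ F : (Fin 2 → ℝ) → ℂ, MemLp F 2 volume ∧ ¬ (F =ᵐ[volume] 0) ∧
      ∀ lam ∈ {p : (Fin 2 → ℝ) × (Fin 2 → ℝ) | ∃ m₁ m₂ n₁ n₂ : ℤ,
          p = (![(m₁ : ℝ), (m₂ : ℝ)],
               ![a * ((n₁ : ℝ) + (n₂ : ℝ)), b * ((n₂ : ℝ) - (n₁ : ℝ))])},
        gaborCoef F (gaussian (Fin 2)) lam.1 lam.2 = 0 := by
  obtain ⟨u, hu, ⟨x₁, ω₁, hu₁⟩, hu_lattice⟩ :=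
    exists_memLp_gaborCoef₁_ne_zero_and_eq_zero_on_lattice (c := 2 * a) (by linarith)
  obtain ⟨v, hv, ⟨x₂, ω₂, hv₂⟩, hv_lattice⟩ :=
    exists_memLp_gaborCoef₁_ne_zero_and_eq_zero_on_lattice (c := 2 * b) (by linarith)
  set f : Fin 2 → ℝ → ℂ := ![u, fun t => cexp (2 * π * I * b * t) * v t]
  have hcoef (x ω : Fin 2 → ℝ) : gaborCoef (fun t => ∏ i, f i (t i)) (gaussian (Fin 2)) x ω
      = ((2 : ℝ) ^ ((2 : ℝ) / 4) : ℝ)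
        * (gaborCoef₁ u (x 0) (ω 0) * gaborCoef₁ v (x 1) (ω 1 - b)) := by
    rw [gaborCoef_pi_prod, Fin.prod_univ_two]
    simp [f, gaborCoef₁_modulate]
  refine ⟨fun t => ∏ i, f i (t i), memLp_two_pi_prod (Fin.forall_fin_two.2 ⟨hu, hv.modulate b⟩),
    not_ae_eq_zero_of_gaborCoef_ne_zero (g := gaussian (Fin 2)) (x := ![x₁, x₂])
      (ω := ![ω₁, ω₂ + b]) ?_, ?_⟩
  · rw [hcoef]
    simpa using ⟨hu₁, hv₂⟩
  · rintro _ ⟨m₁, m₂, n₁, n₂, rfl⟩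
    obtain ⟨l, hl | hl⟩ := Int.even_or_odd' (n₁ + n₂) <;>
      have hl' := congrArg (Int.cast : ℤ → ℝ) hl <;> push_cast at hl' <;> rw [hcoef]
    · have hfreq : a * ((n₁ : ℝ) + n₂) = 2 * a * l := by linear_combination a * hl'
      simp only [Matrix.cons_val_zero]
      rw [hfreq, hu_lattice, zero_mul, mul_zero]
    · have hfreq : b * ((n₂ : ℝ) - n₁) - b = 2 * b * ↑(l - n₁) := by
        push_cast; linear_combination b * hl'
      simp only [Matrix.cons_val_one, Matrix.cons_val_fin_one]
      rw [hfreq, hv_lattice, mul_zero, mul_zero]
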